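/- arXiv:2004.10997 — 4 statements merged into one kernel-verified Lean document; each statement's English description precedes it below -/
import Mathlib

section
/- Let K be a field of characteristic 0 with algebraic closure Ω, let L be an intermediate field of Ω/K with [L : K] = 2, and let g ∈ K[X] be irreducible over K. If the image of g in L[X] is reducible, then L is contained in the splitting field of g over K inside Ω. -/
/-!
If `g` factors over `L`, some root `α` of `g` has degree less than `deg g` over `L`.
Then `[L(α) : K] = 2 [L(α) : L] < 2 [K(α) : K]`, and since `K(α) ⊆ L(α)` the degree
`[L(α) : K(α)]` is a positive integer below `2`. Hence `L ⊆ L(α) = K(α)`, and `K(α)` lies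
in the splitting field.
-/

open Polynomial IntermediateField Module

theorem Polynomial.exists_aeval_eq_zero_natDegree_minpoly_lt {L Ω : Type*} [Field L] [Field Ω]
    [Algebra L Ω] [IsAlgClosed Ω] {p : L[X]} (hp : 0 < p.natDegree) (hirr : ¬Irreducible p) :
    ∃ α : Ω, aeval α p = 0 ∧ (minpoly L α).natDegree < p.natDegree := by
  have hp0 : p ≠ 0 := ne_zero_of_natDegree_gt hp
  have hpu : ¬IsUnit p := fun h => hp.ne' (natDegree_eq_zero_of_isUnit h)
  simp only [irreducible_iff_lt_natDegree_lt hp0 hpu, not_forall, not_not, Finset.mem_Ioc] at hirr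
  obtain ⟨q, hq, ⟨hq_pos, hq_le⟩, hqp⟩ := hirr
  obtain ⟨α, hα⟩ :=
    IsAlgClosed.exists_aeval_eq_zero Ω q (natDegree_pos_iff_degree_pos.mp hq_pos).ne'
  refine ⟨α, ?_, ?_⟩
  · obtain ⟨r, rfl⟩ := hqp
    simp [hα]
  · have := natDegree_le_of_dvd (minpoly.dvd L α hα) hq.ne_zero
    omega

theorem IntermediateField.eq_of_le_of_finrank_lt_two_mul {K E : Type*} [Field K] [Field E]
    [Algebra K E] {F F' : IntermediateField K E} [FiniteDimensional K F'] (h : F ≤ F')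
    (hlt : finrank K F' < 2 * finrank K F) : F = F' := by
  have hmul := finrank_bot_mul_relfinrank h
  have hpos : 0 < finrank K F' := finrank_pos
  have hr : relfinrank F F' = 1 := by
    rcases Nat.lt_or_ge (relfinrank F F') 2 with h2 | h2
    · interval_cases relfinrank F F' <;> omega
    · nlinarith
  exact le_antisymm h (relfinrank_eq_one_iff.mp hr)

theorem IntermediateField.le_adjoin_simple_of_natDegree_minpoly_lt {K Ω : Type*} [Field K]
    [Field Ω] [Algebra K Ω] {L : IntermediateField K Ω} (hL : finrank K L = 2) {α : Ω}
    (hα : IsIntegral K α) (hlt : (minpoly L α).natDegree < (minpoly K α).natDegree) :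
    L ≤ K⟮α⟯ := by
  have hαL : IsIntegral L α := hα.tower_top
  have hfinrank : finrank K (restrictScalars K L⟮α⟯) = 2 * (minpoly L α).natDegree := by
    rw [← adjoin.finrank hαL, ← hL]
    exact (Module.finrank_mul_finrank K L L⟮α⟯).symm
  have : FiniteDimensional K (restrictScalars K L⟮α⟯) :=
    .of_finrank_pos (by rw [hfinrank]; have := minpoly.natDegree_pos hαL; omega)
  have hle : K⟮α⟯ ≤ restrictScalars K L⟮α⟯ :=
    adjoin_simple_le_iff.mpr (mem_adjoin_simple_self L α)
  have heq := eq_of_le_of_finrank_lt_two_mul hle (by rw [hfinrank, adjoin.finrank hα]; omega)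
  rw [heq, restrictScalars_adjoin_eq_sup]
  exact le_sup_left

theorem quadratic_subfield_le_splitting_field_general
    (K Ω : Type) [Field K] [Field Ω] [Algebra K Ω] [IsAlgClosure K Ω]
    (L : IntermediateField K Ω) (hL : Module.finrank K L = 2)
    (g : Polynomial K) (hg : Irreducible g)
    (hred : ¬ Irreducible (g.map (algebraMap K L))) :
    L ≤ IntermediateField.adjoin K (g.rootSet Ω) := by
  have : IsAlgClosed Ω := IsAlgClosure.isAlgClosed K
  obtain ⟨α, hαL, hlt⟩ := exists_aeval_eq_zero_natDegree_minpoly_lt (Ω := Ω)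
    (by rw [natDegree_map]; exact hg.natDegree_pos) hred
  rw [aeval_map_algebraMap] at hαL
  have hαK : IsIntegral K α := Algebra.IsIntegral.isIntegral α
  have hdeg : (minpoly K α).natDegree = g.natDegree := by
    rw [← minpoly.eq_of_irreducible hg hαL, natDegree_mul_leadingCoeff_inv _ hg.ne_zero]
  calc L ≤ K⟮α⟯ := le_adjoin_simple_of_natDegree_minpoly_lt hL hαK
        (by rwa [hdeg, ← natDegree_map (algebraMap K L)])
    _ ≤ adjoin K (g.rootSet Ω) :=
        adjoin_simple_le_iff.mpr (subset_adjoin K _ (mem_rootSet.mpr ⟨hg.ne_zero, hαL⟩))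

/-- Let `K` be a field of characteristic 0 with algebraic closure `Ω`, let `L` be an
intermediate field of `Ω/K` with `[L : K] = 2`, and let `g ∈ K[X]` be irreducible over
`K`. If the image of `g` in `L[X]` is reducible, then `L` is contained in the splitting
field of `g` over `K` inside `Ω` (the subfield generated over `K` by the roots of `g`). -/
theorem quadratic_subfield_le_splitting_field
    (K Ω : Type) [Field K] [Field Ω] [Algebra K Ω] [IsAlgClosure K Ω] [CharZero K]
    (L : IntermediateField K Ω) (hL : Module.finrank K L = 2)
    (g : Polynomial K) (hg : Irreducible g)
    (hred : ¬ Irreducible (g.map (algebraMap K L))) :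
    L ≤ IntermediateField.adjoin K (g.rootSet Ω) :=
  quadratic_subfield_le_splitting_field_general K Ω L hL g hg hred
end

section
/- The polynomials p₂₄ and r₂₄ are coprime in ℚ[X], and there exists a monic squarefree polynomial S ∈ ℚ[X] of degree 12 such that p₂₄ + r₂₄ = S². (In particular q₂₄ := p₂₄ + r₂₄ is a monic degree-24 polynomial which is a perfect square, corresponding to the Belyi map Ψ₂₄ having ramification of cycle structure 2¹² over ∞.) -/
open Polynomial

/-- The numerator `p₂₄` of the degree-24 Belyi map `Ψ₂₄`. -/
noncomputable def p24 : Polynomial ℚ :=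
  (X - C (1/4)) * (X ^ 2 - C (11/16) * X + C (1/8)) ^ 4 *
    (X ^ 5 - C (137/4) * X ^ 4 + C (178/3) * X ^ 3 - C 34 * X ^ 2 + C 8 * X - C (2/3)) ^ 3

/-- The polynomial `r₂₄` with `p₂₄/q₂₄ = 1 - r₂₄/q₂₄` for the degree-24 Belyi map `Ψ₂₄`. -/
noncomputable def r24 : Polynomial ℚ :=
  C 243 * (X - C (1/2)) ^ 3 * (X - C (1/3)) ^ 4 * (X - C (5/16)) ^ 2 *
    (X ^ 2 + C (1/3) * X - C (1/6)) ^ 7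

noncomputable def S24 : Polynomial ℚ := C (-59/13824) + C (19/144) * X + C (-1055/576) * X ^ 2 + C (51959/3456) * X ^ 3 + C (-745169/9216) * X ^ 4 + C (686881/2304) * X ^ 5 + C (-10582187/13824) * X ^ 6 + C (522175/384) * X ^ 7 + C (-19912825/12288) * X ^ 8 + C (619373/512) * X ^ 9 + C (-124583/256) * X ^ 10 + C (549/8) * X ^ 11 + C (1) * X ^ 12

noncomputable def S24d : Polynomial ℚ := C (19/144) + C (-1055/288) * X + C (51959/1152) * X ^ 2 + C (-745169/2304) * X ^ 3 + C (3434405/2304) * X ^ 4 + C (-10582187/2304) * X ^ 5 + C (3655225/384) * X ^ 6 + C (-19912825/1536) * X ^ 7 + C (5574357/512) * X ^ 8 + C (-622915/128) * X ^ 9 + C (6039/8) * X ^ 10 + C (12) * X ^ 11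

noncomputable def u24 : Polynomial ℚ := C (104471321948282808806543579011837290708242859615299043328/11727564985436483639043) + C (-3700646778975465691450699015947032304851167279428879253504/11727564985436483639043) * X + C (56573665997094936747090816776068621599531402307513190711296/11727564985436483639043) * X ^ 2 + C (-157632066536784230578451873554314644883182224313587563757568/3909188328478827879681) * X ^ 3 + C (718800442635410159242280217691070236533428176404600905007104/3909188328478827879681) * X ^ 4 + C (-1087659611347013083986463043756974707839118469399570049662976/3909188328478827879681) * X ^ 5 + C (-6083622281051527490910147578775399892795499058758943072321536/3909188328478827879681) * X ^ 6 + C (35960626990038127140322532970676523971538408630070405131927552/3909188328478827879681) * X ^ 7 + C (-47266552904172829412835163936141788035915582198825711896100864/3909188328478827879681) * X ^ 8 + C (-554049690125571196844451182421560934217203627410812557049462784/11727564985436483639043) * X ^ 9 + C (2182726796967058517570831648513182603192789920207636927963201536/11727564985436483639043) * X ^ 10 + C (-622312442372360469410507227898637380611189772844402140889743360/11727564985436483639043) * X ^ 11 + C (-370979598231339189057169693571945563040040173270005801142976512/434354258719869764409) * X ^ 12 + C (1735681430466389891149345762881274312233586076776611055488991232/1303062776159609293227) * X ^ 13 + C (683486322237603662755314697032841178297299926408269558758506496/434354258719869764409)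 * X ^ 14 + C (-87493533684312039510642289843782026029772001031154510325612544/16087194767402583867) * X ^ 15 + C (19675414140183857615481553902004994078920095995685040931471360/48261584302207751601) * X ^ 16 + C (24708707785908177178187467992329395831981260569462979474489344/2298170681057511981) * X ^ 17 + C (-11826038654452659700755504047070156267342856488707703143661568/1787466085266953763) * X ^ 18 + C (-19267127001896092570123186230453799963886181766499440869244928/1787466085266953763) * X ^ 19 + C (6200704532767064436465984352689200858744497447274732771606528/595822028422317921) * X ^ 20 + C (290051190044336527840636334430146170023945662927718374703104/66202447602479769) * X ^ 21 + C (-366143005450321392606728385727680528087753392878216030453760/66202447602479769) * X ^ 22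

noncomputable def v24 : Polynomial ℚ := C (-534893168375207981089503124537286672767017798737891950592/434354258719869764409) + C (10523596760669764231313284233644875576336368785140446396416/144784752906623254803) * X + C (-10874292102373617768436936747832811967372718667840794656768/5362398255800861289) * X ^ 2 + C (5147958028740620065541503702286232623462026199300435892764672/144784752906623254803) * X ^ 3 + C (-190831546996884455813978869946763715366717151482922257480941568/434354258719869764409) * X ^ 4 + C (1766138331993087256110388596875265035736518275779791556396974080/434354258719869764409) * X ^ 5 + C (-1411200903744967706032916514658933330921241221185888933730844672/48261584302207751601) * X ^ 6 + C (72657601945342890654385418144599218930964724165680212833375092736/434354258719869764409) * X ^ 7 + C (-47963288513757245893759753082563361778089557036564750485375156224/62050608388552823487) * X ^ 8 + C (1265205371037885703476886775403117816296788556586810660765298589696/434354258719869764409) * X ^ 9 + C (-3908364122943539893257948501700916549554541173139533075798310256640/434354258719869764409) * X ^ 10 + C (9911815790332692595674958533040789456077134230729560124008435810304/434354258719869764409) * X ^ 11 + C (-20595501611577579172126598634274363162275654982912064709518165278720/434354258719869764409) * X ^ 12 + C (3874171892203872588379672650478461340785352911917549817601016725504/48261584302207751601) * X ^ 13 + C (-15876190350669955413014478494510830990483404175013366216350780358656/144784752906623254803)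 * X ^ 14 + C (7387652087899564419635290896009116222135994411783537142862709784576/62050608388552823487) * X ^ 15 + C (-43650512125786976383820630689292981822015652730855965249501906599936/434354258719869764409) * X ^ 16 + C (27710502685769294074168465984034228428483932663407981095542704832512/434354258719869764409) * X ^ 17 + C (-465502840519907806330499402972019889813977938287289962175142035456/16087194767402583867) * X ^ 18 + C (59337366977374138911256820701950241646078267538041327506644008960/6894512043172535943) * X ^ 19 + C (-22941690102267142724402909678792567830361227603173488573944954880/16087194767402583867) * X ^ 20 + C (161687757927717923782363002878153426168333678693441333956182016/1787466085266953763) * X ^ 21 + C (-38597763135284212229319593691188721421205144392811070560927744/16087194767402583867) * X ^ 22 + C (366143005450321392606728385727680528087753392878216030453760/16087194767402583867) * X ^ 23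

noncomputable def uS : Polynomial ℚ := C (1513871912922298217249202688/48629390607) + C (-37180786431096739496630951936/48629390607) * X + C (44267363834767058180423112704/5403265623) * X ^ 2 + C (-2434791185094468543929348443136/48629390607) * X ^ 3 + C (9304847658765792799846361237248/48629390607) * X ^ 4 + C (-7632659807705183151519999051776/16209796869) * X ^ 5 + C (11961498265973106381582493036288/16209796869) * X ^ 6 + C (-3758783252648984486323088544256/5403265623) * X ^ 7 + C (37614988840278272924484388864/110270727) * X ^ 8 + C (-100675731022251336660805451776/1801088541) * X ^ 9 + C (-1592500689952841116377153536/1801088541) * X ^ 10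

noncomputable def vS : Polynomial ℚ := C (146905333655289912944734720/145888171821) + C (-4071063711354746460619489792/145888171821) * X + C (7143606463469313203564489728/20841167403) * X ^ 2 + C (-357334838118061341637888041728/145888171821) * X ^ 3 + C (1638660476510346859586061473216/145888171821) * X ^ 4 + C (-5013624140946815729588169874016/145888171821) * X ^ 5 + C (127067713463706559505743960928/1801088541) * X ^ 6 + C (-1538365670314808622563659072448/16209796869) * X ^ 7 + C (423770901047254949229925869568/5403265623) * X ^ 8 + C (-185174715116869606301662327808/5403265623) * X ^ 9 + C (27445711085729786698771824640/5403265623) * X ^ 10 + C (398125172488210279094288384/5403265623) * X ^ 11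

lemma bezout_pr : u24 * p24 + v24 * r24 = 1 := by
  refine Polynomial.funext fun x => ?_
  simp only [p24, r24, u24, v24, eval_add, eval_mul, eval_sub, eval_pow, eval_C, eval_X, eval_one]
  norm_num
  ring

lemma S24_deriv : derivative S24 = S24d := by
  unfold S24 S24d
  simp only [derivative_add, derivative_mul, derivative_C, derivative_X_pow, derivative_X,
    zero_mul, mul_zero, zero_add, add_zero, mul_one, one_mul]
  refine Polynomial.funext fun x => ?_
  simp only [eval_add, eval_mul, eval_pow, eval_C, eval_X, eval_natCast]
  norm_num
  ring

lemma bezout_S : uS * S24 + vS * derivative S24 = 1 := by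
  rw [S24_deriv]
  refine Polynomial.funext fun x => ?_
  simp only [S24, S24d, uS, vS, eval_add, eval_mul, eval_pow, eval_C, eval_X, eval_one]
  norm_num
  ring

lemma sum_eq_sq : p24 + r24 = S24 ^ 2 := by
  refine Polynomial.funext fun x => ?_
  simp only [p24, r24, S24, eval_add, eval_mul, eval_sub, eval_pow, eval_C, eval_X]
  norm_num
  ring

lemma S24_monic : S24.Monic := by unfold S24; monicity!

lemma S24_deg : S24.natDegree = 12 := by unfold S24; compute_degree!

/-- `p₂₄` and `r₂₄` are coprime, and `q₂₄ = p₂₄ + r₂₄` is the square of a monic squarefree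
polynomial of degree 12 (so the Belyi map `Ψ₂₄` has ramification of cycle structure `2¹²`
over `∞`). -/
theorem p24_r24_coprime_and_sum_is_square :
    IsCoprime p24 r24 ∧
      ∃ S : Polynomial ℚ, S.Monic ∧ Squarefree S ∧ S.natDegree = 12 ∧ p24 + r24 = S ^ 2 := by
  refine ⟨⟨u24, v24, bezout_pr⟩, S24, S24_monic, ?_, S24_deg, sum_eq_sq⟩
  exact Polynomial.Separable.squarefree ⟨uS, vS, bezout_S⟩
end

section
/- Let ι : GL₆(F₂) → Sym(V∖{0}) be the injective homomorphism given by the natural action of GL₆(F₂) on the 63 nonzero vectors of V = F₂⁶, and let P denote its image. Then the normalizer of P in the full symmetric group Sym(V∖{0}) equals P; that is, PSL₆(2) is self-normalizing in S₆₃. -/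
/-! A permutation `f` of `𝔽₂⁶` fixing `0` and normalizing the linear group is additive. Indeed,
conjugation by `f` carries the linear maps fixing `x` and `y` onto those fixing `f x` and `f y`,
so the latter all fix `f (x + y)`; transvections show that the only vectors they all fix lie in
the span `{0, f x, f y, f x + f y}`, and injectivity of `f` leaves `f (x + y) = f x + f y`.
Additive bijections of `𝔽₂⁶` are linear, and extending permutations of the nonzero vectors
by `0 ↦ 0` carries this over to `S₆₃`. -/

open Equiv

theorem Submodule.exists_linearEquiv_fixing_moving_of_notMem {K V : Type*} [DivisionRing K]
    [AddCommGroup V] [Module K V] {p : Submodule K V} (hp : p ≠ ⊥) {w : V} (hw : w ∉ p) :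
    ∃ e : V ≃ₗ[K] V, (∀ x ∈ p, e x = x) ∧ e w ≠ w := by
  obtain ⟨u, hu, hu0⟩ := (Submodule.ne_bot_iff p).mp hp
  obtain ⟨f, hfw, hfp⟩ := p.exists_dual_map_eq_bot_of_notMem hw inferInstance
  have hf : ∀ x ∈ p, f x = 0 := fun x hx =>
    (Submodule.mem_bot K).mp (hfp ▸ Submodule.mem_map_of_mem hx)
  refine ⟨LinearEquiv.transvection (hf u hu), fun x hx => ?_, ?_⟩
  · rw [LinearEquiv.transvection.apply, hf x hx, zero_smul, add_zero]
  · rw [LinearEquiv.transvection.apply, ne_eq, add_eq_left]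
    exact smul_ne_zero hfw hu0

def linearPerms (K V : Type*) [Semiring K] [AddCommMonoid V] [Module K V] : Subgroup (Perm V) :=
  (MulAction.toPermHom (V ≃ₗ[K] V) V).range

theorem apply_add_mem_span_pair_of_mem_normalizer {K V : Type*} [DivisionRing K]
    [AddCommGroup V] [Module K V] {f : Perm V}
    (hf : f ∈ Subgroup.normalizer (linearPerms K V)) (hf0 : f 0 = 0) (x y : V) :
    f (x + y) ∈ Submodule.span K {f x, f y} := by
  by_cases hx : x = 0
  · simpa [hx] using Submodule.subset_span (by simp)
  have hp : Submodule.span K {f x, f y} ≠ ⊥ :=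
    (Submodule.ne_bot_iff _).mpr ⟨f x, Submodule.subset_span (by simp), hf0 ▸ f.injective.ne hx⟩
  by_contra hxy
  obtain ⟨e, he, hmove⟩ := Submodule.exists_linearEquiv_fixing_moving_of_notMem hp hxy
  obtain ⟨e', he'⟩ := (Subgroup.mem_normalizer_iff''.mp hf _).mp ⟨e, rfl⟩
  have hconj : ∀ z, e (f z) = f (e' z) := fun z =>
    Perm.inv_eq_iff_eq.mp (DFunLike.congr_fun he' z).symm
  have hfix : ∀ z, f z ∈ Submodule.span K {f x, f y} → e' z = z := fun z hz =>
    f.injective (by rw [← hconj, he _ hz])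
  apply hmove
  rw [hconj, map_add e', hfix x (Submodule.subset_span (by simp)),
    hfix y (Submodule.subset_span (by simp))]

theorem ZModModule.mem_span_pair_iff {V : Type*} [AddCommGroup V] [Module (ZMod 2) V]
    {a b z : V} : z ∈ Submodule.span (ZMod 2) {a, b} ↔ z = 0 ∨ z = a ∨ z = b ∨ z = a + b := by
  constructor
  · intro hz
    obtain ⟨p, q, rfl⟩ := Submodule.mem_span_pair.mp hz
    have h01 : ∀ t : ZMod 2, t = 0 ∨ t = 1 := by decide
    rcases h01 p with rfl | rfl <;> rcases h01 q with rfl | rfl <;> simp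
  · rintro (rfl | rfl | rfl | rfl)
    exacts [zero_mem _, Submodule.subset_span (by simp), Submodule.subset_span (by simp),
      add_mem (Submodule.subset_span (by simp)) (Submodule.subset_span (by simp))]

section

variable {V : Type*} [AddCommGroup V] [Module (ZMod 2) V]

theorem map_add_of_mem_normalizer_linearPerms {f : Perm V}
    (hf : f ∈ Subgroup.normalizer (linearPerms (ZMod 2) V)) (hf0 : f 0 = 0) (x y : V) :
    f (x + y) = f x + f y := by
  rcases ZModModule.mem_span_pair_iff.mp (apply_add_mem_span_pair_of_mem_normalizer hf hf0 x y)
    with h | h | h | h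
  · obtain rfl : x = y := (ZModModule.neg_eq_self x).symm.trans
      (neg_eq_of_add_eq_zero_right (f.injective (h.trans hf0.symm)))
    rw [h, ZModModule.add_self]
  · obtain rfl : y = 0 := add_eq_left.mp (f.injective h)
    rw [h, hf0, add_zero]
  · obtain rfl : x = 0 := add_eq_right.mp (f.injective h)
    rw [h, hf0, zero_add]
  · exact h

theorem mem_linearPerms_of_mem_normalizer {f : Perm V}
    (hf : f ∈ Subgroup.normalizer (linearPerms (ZMod 2) V)) (hf0 : f 0 = 0) :
    f ∈ linearPerms (ZMod 2) V :=
  ⟨LinearEquiv.ofBijective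
    ((AddMonoidHom.mk' f (map_add_of_mem_normalizer_linearPerms hf hf0)).toZModLinearMap 2)
    f.bijective, Perm.ext fun _ => rfl⟩

end

theorem Matrix.GeneralLinearGroup.map_range_ofSubtype_eq_linearPerms {n R : Type*} [Fintype n]
    [DecidableEq n] [CommRing R] [DecidableEq R] (ι : GL n R →* Perm {v : n → R // v ≠ 0})
    (hι : ∀ g v, (ι g v : n → R) = (g : Matrix n n R).mulVec v) :
    ι.range.map Perm.ofSubtype = linearPerms R (n → R) := by
  let toLinearEquiv : GL n R ≃* ((n → R) ≃ₗ[R] (n → R)) :=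
    toLin.trans (LinearMap.GeneralLinearGroup.generalLinearEquiv R (n → R))
  have hcomp : Perm.ofSubtype.comp ι =
      (MulAction.toPermHom _ (n → R)).comp toLinearEquiv.toMonoidHom := by
    ext g v
    by_cases hv : v = 0
    · subst hv
      simp [Perm.ofSubtype_apply_of_not_mem]
    · rw [MonoidHom.comp_apply, Perm.ofSubtype_apply_of_mem (p := (· ≠ 0)) _ hv, hι]
      rfl
  rw [MonoidHom.map_range, hcomp, MonoidHom.range_comp,
    MonoidHom.range_eq_top.mpr toLinearEquiv.surjective, ← MonoidHom.range_eq_map]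
  rfl

theorem GL6_F2_self_normalizing_in_S63_general
    (ι : Matrix.GeneralLinearGroup (Fin 6) (ZMod 2) →*
      Equiv.Perm {v : Fin 6 → ZMod 2 // v ≠ 0})
    (hι : ∀ (g : Matrix.GeneralLinearGroup (Fin 6) (ZMod 2))
      (v : {v : Fin 6 → ZMod 2 // v ≠ 0}),
      ((ι g v : {v : Fin 6 → ZMod 2 // v ≠ 0}) : Fin 6 → ZMod 2) =
        (g : Matrix (Fin 6) (Fin 6) (ZMod 2)).mulVec (v : Fin 6 → ZMod 2)) :
    Subgroup.normalizer ι.range = ι.range := by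
  refine le_antisymm (fun σ hσ => ?_) Subgroup.le_normalizer
  have hrange := Matrix.GeneralLinearGroup.map_range_ofSubtype_eq_linearPerms ι hι
  have hσ' : Perm.ofSubtype σ ∈ Subgroup.normalizer (linearPerms (ZMod 2) (Fin 6 → ZMod 2)) :=
    hrange ▸ Subgroup.le_normalizer_map _ (Subgroup.mem_map_of_mem _ hσ)
  have hσ0 : Perm.ofSubtype σ 0 = 0 := Perm.ofSubtype_apply_of_not_mem σ (not_not.mpr rfl)
  rw [← Subgroup.mem_map_iff_mem Perm.ofSubtype_injective, hrange]
  exact mem_linearPerms_of_mem_normalizer hσ' hσ0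

/-- `PSL₆(2)` is self-normalizing in `S₆₃`: if `ι` is the (injective) homomorphism from
`GL₆(𝔽₂)` to the symmetric group on the 63 nonzero vectors of `𝔽₂⁶` given by the natural
action, and `P` is its image, then the normalizer of `P` in the full symmetric group
equals `P`. -/
theorem GL6_F2_self_normalizing_in_S63
    (ι : Matrix.GeneralLinearGroup (Fin 6) (ZMod 2) →*
      Equiv.Perm {v : Fin 6 → ZMod 2 // v ≠ 0})
    (hinj : Function.Injective ι)
    (hι : ∀ (g : Matrix.GeneralLinearGroup (Fin 6) (ZMod 2))
      (v : {v : Fin 6 → ZMod 2 // v ≠ 0}),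
      ((ι g v : {v : Fin 6 → ZMod 2 // v ≠ 0}) : Fin 6 → ZMod 2) =
        (g : Matrix (Fin 6) (Fin 6) (ZMod 2)).mulVec (v : Fin 6 → ZMod 2)) :
    Subgroup.normalizer ι.range = ι.range :=
  GL6_F2_self_normalizing_in_S63_general ι hι
end

section
/- Let K be a field and p, q ∈ K[X] coprime polynomials with n := max(deg p, deg q) ≥ 1. Then the field K(X) of rational functions over K is a finite extension of degree exactly n over its subfield K(p(X)/q(X)) generated over K by the rational function p(X)/q(X). -/
/-! Over `K(f)` the element `X` is a root of `num f (T) - f * denom f (T)`, which is irreducible;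
Mathlib's `RatFunc.finrank_eq_max_natDegree` thus computes `[K(X) : K(f)]` as the larger degree of
the normalized numerator and denominator of `f`. For `f = p / q` with `p, q` coprime these agree
with `p` and `q` up to units, since each divides the other. -/

open Polynomial

theorem Polynomial.natDegree_eq_of_associated {R : Type*} [CommRing R] [IsDomain R] {p q : R[X]}
    (h : Associated p q) : p.natDegree = q.natDegree :=
  natDegree_eq_of_degree_eq (degree_eq_degree_of_associated h)

namespace RatFunc

variable {K : Type} [Field K] {p q : K[X]}

theorem num_div_mul_eq_mul_denom_div (hq : q ≠ 0) :
    num (algebraMap K[X] K⟮X⟯ p / algebraMap K[X] K⟮X⟯ q) * q =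
      p * denom (algebraMap K[X] K⟮X⟯ p / algebraMap K[X] K⟮X⟯ q) := by
  set f := algebraMap K[X] K⟮X⟯ p / algebraMap K[X] K⟮X⟯ q
  have h : algebraMap K[X] K⟮X⟯ f.num / algebraMap K[X] K⟮X⟯ f.denom = f := num_div_denom f
  rw [div_eq_div_iff (algebraMap_ne_zero f.denom_ne_zero) (algebraMap_ne_zero hq),
    ← map_mul, ← map_mul] at h
  exact algebraMap_injective K h

theorem associated_num_div (hpq : IsCoprime p q) (hq : q ≠ 0) :
    Associated (num (algebraMap K[X] K⟮X⟯ p / algebraMap K[X] K⟮X⟯ q)) p :=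
  associated_of_dvd_dvd (num_div_dvd p hq)
    (hpq.dvd_of_dvd_mul_right ⟨_, num_div_mul_eq_mul_denom_div hq⟩)

theorem associated_denom_div (hpq : IsCoprime p q) (hq : q ≠ 0) :
    Associated (denom (algebraMap K[X] K⟮X⟯ p / algebraMap K[X] K⟮X⟯ q)) q :=
  associated_of_dvd_dvd (denom_div_dvd p q)
    (hpq.symm.dvd_of_dvd_mul_left
      ⟨_, (num_div_mul_eq_mul_denom_div hq).symm.trans (mul_comm _ _)⟩)

end RatFunc

theorem finrank_ratFunc_over_adjoin_ratio_general
    (K : Type) [Field K] (p q : Polynomial K) (hco : IsCoprime p q) :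
    Module.finrank
      (IntermediateField.adjoin K
        ({algebraMap (Polynomial K) (RatFunc K) p / algebraMap (Polynomial K) (RatFunc K) q}
          : Set (RatFunc K)))
      (RatFunc K) = max p.natDegree q.natDegree := by
  rw [RatFunc.finrank_eq_max_natDegree]
  rcases eq_or_ne q 0 with rfl | hq
  · simp [natDegree_eq_zero_of_isUnit (isCoprime_zero_right.mp hco)]
  · rw [natDegree_eq_of_associated (RatFunc.associated_num_div hco hq),
      natDegree_eq_of_associated (RatFunc.associated_denom_div hco hq)]

/-- For a field `K` and coprime polynomials `p, q ∈ K[X]`, not both constant, the field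
`K(X)` of rational functions is a finite extension of degree exactly
`n = max(deg p, deg q)` of its subfield `K(p(X)/q(X))`. -/
theorem finrank_ratFunc_over_adjoin_ratio
    (K : Type) [Field K] (p q : Polynomial K) (hco : IsCoprime p q)
    (hn : 1 ≤ max p.natDegree q.natDegree) :
    Module.finrank
      (IntermediateField.adjoin K
        ({algebraMap (Polynomial K) (RatFunc K) p / algebraMap (Polynomial K) (RatFunc K) q}
          : Set (RatFunc K)))
      (RatFunc K) = max p.natDegree q.natDegree :=
  finrank_ratFunc_over_adjoin_ratio_general K p q hco
end
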